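/- The matrix E' := I - P_Z^perp (I - E_WZ) is symmetric and idempotent, and satisfies E' W = W and E' Z = Z. -/

import Mathlib

/-!
Write `Q = P_Z^⊥` and `E = E_WZ`, so that `E' = (1 - Q) + Q E`. Because `Zᵀ Z = 1`, `Q` is a
symmetric idempotent with `Q Z = 0`; then `E` is idempotent with `E Q = E` and `E W = W`, and
`Q E = Q W (Wᵀ Q W)⁻¹ Wᵀ Q` is symmetric. These identities alone make `E'` a symmetric
idempotent fixing `W` and `Z`.
-/

open Matrix

theorem IsIdempotentElem.one_sub_mul_one_sub {R : Type*} [Ring R] {q e : R}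
    (hq : IsIdempotentElem q) (he : IsIdempotentElem e) (heq : e * q = e) :
    IsIdempotentElem (1 - q * (1 - e)) := by
  have hqe : q * e * (1 - q) = 0 := by rw [mul_assoc, mul_sub, heq, mul_one, sub_self, mul_zero]
  have hqeqe : q * e * (q * e) = q * e := by
    rw [← mul_assoc, mul_assoc q e q, heq, mul_assoc, he.eq]
  have hsplit : 1 - q * (1 - e) = (1 - q) + q * e := by noncomm_ring
  rw [IsIdempotentElem, hsplit, add_mul, mul_add, mul_add, hq.one_sub.eq, ← mul_assoc,
    hq.one_sub_mul_self, zero_mul, hqe, hqeqe, add_zero, zero_add]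

namespace Matrix

variable {m n o R : Type*} [Fintype m] [Fintype n] [DecidableEq n] [CommRing R]

theorem isIdempotentElem_mul_transpose {Z : Matrix m n R} (hZ : Zᵀ * Z = 1) :
    IsIdempotentElem (Z * Zᵀ) := by
  rw [IsIdempotentElem, Matrix.mul_assoc, ← Matrix.mul_assoc Zᵀ, hZ, Matrix.one_mul]

theorem one_sub_mul_transpose_mul_self [DecidableEq m] {Z : Matrix m n R} (hZ : Zᵀ * Z = 1) :
    (1 - Z * Zᵀ) * Z = 0 := by
  rw [Matrix.sub_mul, Matrix.one_mul, Matrix.mul_assoc, hZ, Matrix.mul_one, sub_self]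

/-- The projection `E_WZ` of the paper, with `Q = P_Z^⊥`. -/
noncomputable def obliqueProj (Q : Matrix m m R) (W : Matrix m n R) : Matrix m m R :=
  W * (Wᵀ * Q * W)⁻¹ * Wᵀ * Q

variable {Q : Matrix m m R} {W : Matrix m n R}

theorem obliqueProj_mul_self (hM : IsUnit (Wᵀ * Q * W)) : obliqueProj Q W * W = W := by
  rw [obliqueProj, Matrix.mul_assoc, Matrix.mul_assoc, Matrix.mul_assoc, ← Matrix.mul_assoc Wᵀ,
    nonsing_inv_mul _ ((isUnit_iff_isUnit_det _).mp hM), Matrix.mul_one]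

theorem isIdempotentElem_obliqueProj (hM : IsUnit (Wᵀ * Q * W)) :
    IsIdempotentElem (obliqueProj Q W) := by
  calc obliqueProj Q W * obliqueProj Q W
      = obliqueProj Q W * W * ((Wᵀ * Q * W)⁻¹ * Wᵀ * Q) := by
        simp only [obliqueProj, Matrix.mul_assoc]
    _ = obliqueProj Q W := by
        rw [obliqueProj_mul_self hM]; simp only [obliqueProj, Matrix.mul_assoc]

theorem obliqueProj_mul_of_isIdempotentElem (hQ : IsIdempotentElem Q) :
    obliqueProj Q W * Q = obliqueProj Q W := by
  rw [obliqueProj, Matrix.mul_assoc _ Q, hQ.eq]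

theorem transpose_mul_obliqueProj (hQ : Qᵀ = Q) :
    (Q * obliqueProj Q W)ᵀ = Q * obliqueProj Q W := by
  simp only [obliqueProj, transpose_mul, transpose_nonsing_inv, hQ, transpose_transpose,
    Matrix.mul_assoc]

theorem transpose_one_sub_mul_one_sub_obliqueProj [DecidableEq m] (hQ : Qᵀ = Q) :
    (1 - Q * (1 - obliqueProj Q W))ᵀ = 1 - Q * (1 - obliqueProj Q W) := by
  rw [Matrix.mul_sub, Matrix.mul_one, transpose_sub, transpose_sub, transpose_one, hQ,
    transpose_mul_obliqueProj hQ]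

theorem one_sub_mul_one_sub_obliqueProj_mul_self [DecidableEq m] (hM : IsUnit (Wᵀ * Q * W)) :
    (1 - Q * (1 - obliqueProj Q W)) * W = W := by
  rw [Matrix.sub_mul, Matrix.one_mul, Matrix.mul_assoc, Matrix.sub_mul, Matrix.one_mul,
    obliqueProj_mul_self hM, sub_self, Matrix.mul_zero, sub_zero]

theorem one_sub_mul_one_sub_obliqueProj_mul_of_mul_eq_zero [DecidableEq m] [Fintype o]
    {Z : Matrix m o R} (hQ : IsIdempotentElem Q) (hQZ : Q * Z = 0) :
    (1 - Q * (1 - obliqueProj Q W)) * Z = Z := by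
  have hEZ : obliqueProj Q W * Z = 0 := by
    rw [← obliqueProj_mul_of_isIdempotentElem hQ, Matrix.mul_assoc, hQZ, Matrix.mul_zero]
  rw [Matrix.sub_mul, Matrix.one_mul, Matrix.mul_assoc, Matrix.sub_mul, Matrix.one_mul, hEZ,
    sub_zero, hQZ, sub_zero]

end Matrix

theorem Eprime_symmetric_idempotent_general {N P L : ℕ}
    (W : Matrix (Fin N) (Fin P) ℝ) (Z : Matrix (Fin N) (Fin L) ℝ)
    (hZ : Zᵀ * Z = 1)
    (hY : IsUnit (Wᵀ * (1 - Z * Zᵀ) * W)) :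
    (1 - (1 - Z * Zᵀ) * (1 - W * (Wᵀ * (1 - Z * Zᵀ) * W)⁻¹ * Wᵀ * (1 - Z * Zᵀ)))ᵀ =
      1 - (1 - Z * Zᵀ) * (1 - W * (Wᵀ * (1 - Z * Zᵀ) * W)⁻¹ * Wᵀ * (1 - Z * Zᵀ)) ∧
    (1 - (1 - Z * Zᵀ) * (1 - W * (Wᵀ * (1 - Z * Zᵀ) * W)⁻¹ * Wᵀ * (1 - Z * Zᵀ))) ^ 2 =
      1 - (1 - Z * Zᵀ) * (1 - W * (Wᵀ * (1 - Z * Zᵀ) * W)⁻¹ * Wᵀ * (1 - Z * Zᵀ)) ∧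
    (1 - (1 - Z * Zᵀ) * (1 - W * (Wᵀ * (1 - Z * Zᵀ) * W)⁻¹ * Wᵀ * (1 - Z * Zᵀ))) * W = W ∧
    (1 - (1 - Z * Zᵀ) * (1 - W * (Wᵀ * (1 - Z * Zᵀ) * W)⁻¹ * Wᵀ * (1 - Z * Zᵀ))) * Z = Z := by
  have hQ : IsIdempotentElem (1 - Z * Zᵀ) := (isIdempotentElem_mul_transpose hZ).one_sub
  have hQt : (1 - Z * Zᵀ)ᵀ = 1 - Z * Zᵀ := by simp
  have hE' := hQ.one_sub_mul_one_sub (isIdempotentElem_obliqueProj hY)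
    (obliqueProj_mul_of_isIdempotentElem hQ)
  exact ⟨transpose_one_sub_mul_one_sub_obliqueProj hQt, (sq _).trans hE'.eq,
    one_sub_mul_one_sub_obliqueProj_mul_self hY,
    one_sub_mul_one_sub_obliqueProj_mul_of_mul_eq_zero hQ (one_sub_mul_transpose_mul_self hZ)⟩

theorem Eprime_symmetric_idempotent {N P L : ℕ}
    (W : Matrix (Fin N) (Fin P) ℝ) (Z : Matrix (Fin N) (Fin L) ℝ)
    (hW : Wᵀ * W = 1) (hZ : Zᵀ * Z = 1)
    (hrank : (fromCols W Z).rank = P + L)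
    (hY : IsUnit (Wᵀ * (1 - Z * Zᵀ) * W)) :
    (1 - (1 - Z * Zᵀ) * (1 - W * (Wᵀ * (1 - Z * Zᵀ) * W)⁻¹ * Wᵀ * (1 - Z * Zᵀ)))ᵀ =
      1 - (1 - Z * Zᵀ) * (1 - W * (Wᵀ * (1 - Z * Zᵀ) * W)⁻¹ * Wᵀ * (1 - Z * Zᵀ)) ∧
    (1 - (1 - Z * Zᵀ) * (1 - W * (Wᵀ * (1 - Z * Zᵀ) * W)⁻¹ * Wᵀ * (1 - Z * Zᵀ))) ^ 2 =
      1 - (1 - Z * Zᵀ) * (1 - W * (Wᵀ * (1 - Z * Zᵀ) * W)⁻¹ * Wᵀ * (1 - Z * Zᵀ)) ∧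
    (1 - (1 - Z * Zᵀ) * (1 - W * (Wᵀ * (1 - Z * Zᵀ) * W)⁻¹ * Wᵀ * (1 - Z * Zᵀ))) * W = W ∧
    (1 - (1 - Z * Zᵀ) * (1 - W * (Wᵀ * (1 - Z * Zᵀ) * W)⁻¹ * Wᵀ * (1 - Z * Zᵀ))) * Z = Z :=
  Eprime_symmetric_idempotent_general W Z hZ hY
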